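/- A finite word w is rich if and only if every prefix of w has a unioccurrent palindromic suffix, i.e., for every nonempty prefix u of w, the longest palindromic suffix of u occurs exactly once in u. -/

import Mathlib

/-- The set of palindromic factors of a word `w` (including the empty word). -/
def palFactors {α : Type*} [DecidableEq α] (w : List α) : Finset (List α) :=
  ((w.inits.flatMap List.tails).filter fun u => u.reverse = u).toFinset

/-- A word is rich if it has `|w| + 1` distinct palindromic factors
(including the empty word). -/
def Rich {α : Type*} [DecidableEq α] (w : List α) : Prop :=
  (palFactors w).card = w.length + 1

/-- `s` is the longest palindromic suffix of `u`: a nonempty palindromic suffix of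
maximal length. -/
def IsLPS {α : Type*} (u s : List α) : Prop :=
  s ≠ [] ∧ s.reverse = s ∧ s <:+ u ∧
    ∀ t : List α, t <:+ u → t.reverse = t → t.length ≤ s.length

/-- Number of occurrences of `s` as a factor of `w` (as the number of starting
positions at which `s` occurs). -/
def numOcc {α : Type*} [DecidableEq α] (s w : List α) : ℕ :=
  ((List.range (w.length + 1)).filter fun i => (w.drop i).take s.length = s).length

/-!
Appending a letter `a` to `u` creates at most one new palindromic factor, namely the longest
palindromic suffix `s` of `u ++ [a]`: a shorter palindromic suffix of `u ++ [a]` is a suffix, hence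
a prefix, of the palindrome `s`, so it already occurs in `u`. Hence `w` has at most `|w| + 1`
palindromic factors, with equality iff each prefix contributes a new factor, i.e. iff the longest
palindromic suffix of each nonempty prefix does not occur earlier. Since appending a letter adds
exactly one occurrence of each nonempty suffix, this means it occurs exactly once.
-/

open scoped Finset

namespace List

variable {α : Type*}

theorem forall_prefix_append_singleton_iff {p : List α → Prop} {u : List α} {a : α} :
    (∀ v, v <+: u ++ [a] → p v) ↔ (∀ v, v <+: u → p v) ∧ p (u ++ [a]) := by
  simp only [prefix_concat_iff]
  exact ⟨fun h => ⟨fun v hv => h v (.inr hv), h _ (.inl rfl)⟩,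
    fun ⟨h, h'⟩ v => Or.rec (fun hv => hv ▸ h') (h v)⟩

theorem infix_iff_exists_prefix_drop {s w : List α} :
    s <:+: w ↔ ∃ i ≤ w.length, s <+: w.drop i := by
  rw [infix_iff_prefix_suffix]
  constructor
  · rintro ⟨t, hst, htw⟩
    exact ⟨w.length - t.length, Nat.sub_le _ _, suffix_iff_eq_drop.1 htw ▸ hst⟩
  · rintro ⟨i, -, hs⟩
    exact ⟨w.drop i, hs, drop_suffix i w⟩

theorem prefix_drop_append_singleton_iff {s u : List α} {a : α} {i : ℕ} :
    s <+: (u ++ [a]).drop i ↔ s <+: u.drop i ∨ s = (u ++ [a]).drop i := by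
  rcases le_or_gt i u.length with hi | hi
  · rw [drop_append_of_le_length hi, prefix_concat_iff, or_comm]
  · simp [drop_eq_nil_of_le (show u.length ≤ i by omega),
      drop_eq_nil_of_le (show (u ++ [a]).length ≤ i by simp; omega)]

theorem infix_of_prefix_of_suffix_append_singleton {s t u : List α} {a : α}
    (hst : s <+: t) (hne : s ≠ t) (ht : t <:+ u ++ [a]) : s <:+: u := by
  rcases suffix_concat_iff.1 ht with rfl | ⟨t', rfl, ht'⟩
  · exact absurd (prefix_nil.1 hst) hne
  · rcases prefix_concat_iff.1 hst with h | h
    · exact absurd h hne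
    · exact h.isInfix.trans ht'.isInfix

end List

section LongestPalindromicSuffix

variable {α : Type*}

theorem exists_isLPS {u : List α} (hu : u ≠ []) : ∃ s, IsLPS u s := by
  classical
  have hlast : [u.getLast hu] <:+ u := ⟨u.dropLast, u.dropLast_append_getLast hu⟩
  obtain ⟨s, hs, hmax⟩ := Finset.exists_max_image {t ∈ u.tails.toFinset | t.reverse = t}
    List.length ⟨[u.getLast hu], by simp [hlast]⟩
  simp only [Finset.mem_filter, List.mem_toFinset, List.mem_tails] at hs hmax
  refine ⟨s, ?_, hs.2, hs.1, fun t ht htp => hmax t ⟨ht, htp⟩⟩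
  rintro rfl
  simpa using hmax _ ⟨hlast, rfl⟩

theorem IsLPS.unique {u s t : List α} (hs : IsLPS u s) (ht : IsLPS u t) : s = t := by
  have hts := ht.2.2.2 s hs.2.2.1 hs.2.1
  exact (List.suffix_of_suffix_length_le hs.2.2.1 ht.2.2.1 hts).eq_of_length
    (le_antisymm hts (hs.2.2.2 t ht.2.2.1 ht.2.1))

end LongestPalindromicSuffix

section Palindromes

variable {α : Type*} [DecidableEq α]

theorem mem_palFactors {w s : List α} : s ∈ palFactors w ↔ s <:+: w ∧ s.reverse = s := by
  simp only [palFactors, List.mem_toFinset, List.mem_filter, List.mem_flatMap, List.mem_inits,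
    List.mem_tails, decide_eq_true_eq]
  constructor
  · rintro ⟨⟨p, hp, hsp⟩, hpal⟩
    exact ⟨hsp.isInfix.trans hp.isInfix, hpal⟩
  · rintro ⟨⟨l, r, rfl⟩, hpal⟩
    exact ⟨⟨l ++ s, ⟨r, rfl⟩, ⟨l, rfl⟩⟩, hpal⟩

theorem palFactors_nil : palFactors ([] : List α) = {[]} := by
  ext t
  simp +contextual [mem_palFactors, List.infix_nil]

theorem palFactors_append_singleton {u s : List α} {a : α} (hs : IsLPS (u ++ [a]) s) :
    palFactors (u ++ [a]) = insert s (palFactors u) := by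
  obtain ⟨-, hspal, hsuf, hmax⟩ := hs
  ext t
  simp only [mem_palFactors, Finset.mem_insert, List.infix_concat_iff]
  constructor
  · rintro ⟨ht | ht, htpal⟩
    · by_cases hts : t = s
      · exact .inl hts
      · have hts' : t <:+ s := List.suffix_of_suffix_length_le ht hsuf (hmax t ht htpal)
        have htp : t <+: s := by simpa [htpal, hspal] using List.reverse_prefix.2 hts'
        exact .inr ⟨List.infix_of_prefix_of_suffix_append_singleton htp hts hsuf, htpal⟩
    · exact .inr ⟨ht, htpal⟩
  · rintro (rfl | ⟨ht, htpal⟩)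
    · exact ⟨.inl hsuf, hspal⟩
    · exact ⟨.inr ht, htpal⟩

theorem card_palFactors_le (w : List α) : #(palFactors w) ≤ w.length + 1 := by
  induction w using List.reverseRecOn with
  | nil => simp [palFactors_nil]
  | append_singleton u a ih =>
    obtain ⟨s, hs⟩ := exists_isLPS (u := u ++ [a]) (by simp)
    rw [palFactors_append_singleton hs, List.length_append, List.length_singleton]
    exact (Finset.card_insert_le s _).trans (by omega)

theorem rich_append_singleton_iff {u s : List α} {a : α} (hs : IsLPS (u ++ [a]) s) :
    Rich (u ++ [a]) ↔ Rich u ∧ s ∉ palFactors u := by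
  have hle := card_palFactors_le u
  unfold Rich
  rw [palFactors_append_singleton hs, List.length_append, List.length_singleton]
  by_cases hmem : s ∈ palFactors u
  · simp only [Finset.insert_eq_self.2 hmem, hmem, not_true_eq_false, and_false, iff_false]
    omega
  · simp only [Finset.card_insert_of_notMem hmem, hmem, not_false_eq_true, and_true]
    omega

end Palindromes

section Occurrences

variable {α : Type*} [DecidableEq α]

theorem numOcc_eq_card (s w : List α) :
    numOcc s w = #{i ∈ Finset.range (w.length + 1) | s <+: w.drop i} := by
  change #{i ∈ Finset.range (w.length + 1) | (w.drop i).take s.length = s} = _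
  simp only [List.prefix_iff_eq_take, eq_comm]

theorem numOcc_eq_zero_iff {s w : List α} : numOcc s w = 0 ↔ ¬ s <:+: w := by
  simp [numOcc_eq_card, Finset.filter_eq_empty_iff, List.infix_iff_exists_prefix_drop]

theorem numOcc_append_singleton_of_suffix {s u : List α} {a : α} (hs : s ≠ [])
    (hsuf : s <:+ u ++ [a]) : numOcc s (u ++ [a]) = numOcc s u + 1 := by
  have hpos : 0 < s.length := List.length_pos_iff.2 hs
  have hocc {i : ℕ} (h : s <+: u.drop i) : i + s.length ≤ u.length := by
    have := h.length_le
    simp only [List.length_drop] at this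
    omega
  have hlast {i : ℕ} (hi : i ≤ u.length + 1) :
      s = (u ++ [a]).drop i ↔ i = u.length + 1 - s.length := by
    constructor
    · rintro rfl
      simp only [List.length_drop, List.length_append, List.length_singleton]
      omega
    · rintro rfl
      simpa using List.suffix_iff_eq_drop.1 hsuf
  have hnew :
      u.length + 1 - s.length ∉ {i ∈ Finset.range (u.length + 1) | s <+: u.drop i} := by
    simp only [Finset.mem_filter, not_and]
    intro _ h
    have := hocc h
    omega
  suffices {i ∈ Finset.range ((u ++ [a]).length + 1) | s <+: (u ++ [a]).drop i} =
      insert (u.length + 1 - s.length) {i ∈ Finset.range (u.length + 1) | s <+: u.drop i} by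
    rw [numOcc_eq_card, numOcc_eq_card, this, Finset.card_insert_of_notMem hnew]
  ext i
  simp only [Finset.mem_filter, Finset.mem_insert, Finset.mem_range,
    List.prefix_drop_append_singleton_iff, List.length_append, List.length_singleton]
  constructor
  · rintro ⟨hi, h | h⟩
    · exact .inr ⟨by have := hocc h; omega, h⟩
    · exact .inl ((hlast (by omega)).1 h)
  · rintro (rfl | ⟨hi, h⟩)
    · exact ⟨by omega, .inr ((hlast (by omega)).2 rfl)⟩
    · exact ⟨by omega, .inl h⟩

theorem IsLPS.numOcc_append_singleton_eq_one_iff {u s : List α} {a : α}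
    (hs : IsLPS (u ++ [a]) s) : numOcc s (u ++ [a]) = 1 ↔ s ∉ palFactors u := by
  rw [numOcc_append_singleton_of_suffix hs.1 hs.2.2.1, Nat.add_eq_right, numOcc_eq_zero_iff,
    mem_palFactors]
  simp [hs.2.1]

end Occurrences

/-- a finite word is rich iff every nonempty prefix has a
unioccurrent longest palindromic suffix. -/
theorem stmt_13 {α : Type*} [DecidableEq α] (w : List α) :
    Rich w ↔ ∀ u : List α, u <+: w → u ≠ [] →
      ∃ s : List α, IsLPS u s ∧ numOcc s u = 1 := by
  induction w using List.reverseRecOn with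
  | nil => simp [Rich, palFactors_nil]
  | append_singleton u a ih =>
    obtain ⟨s, hs⟩ := exists_isLPS (u := u ++ [a]) (by simp)
    have hstep : (u ++ [a] ≠ [] → ∃ t, IsLPS (u ++ [a]) t ∧ numOcc t (u ++ [a]) = 1) ↔
        s ∉ palFactors u := by
      rw [← hs.numOcc_append_singleton_eq_one_iff]
      exact ⟨fun h => let ⟨t, ht, hocc⟩ := h (by simp); hs.unique ht ▸ hocc,
        fun h _ => ⟨s, hs, h⟩⟩
    rw [rich_append_singleton_iff hs, ih, List.forall_prefix_append_singleton_iff, hstep]
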